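/- arXiv:2210.09578 — 2 statements merged into one kernel-verified Lean document; each statement's English description precedes it below -/
import Mathlib

section
/- In the time-varying misspecified Kalman setting, assume additionally that for every t there is a deterministic d×d matrix F_t with E[v_t v_tᵀ | 𝔉_{t−1}] = F_t almost surely. Then for every t ≥ 1: E[(a_{t+1} − a'_{t+1})(a_{t+1} − a'_{t+1})ᵀ] = T_t (K_t − K'_t) F_t (K_t − K'_t)ᵀ T_tᵀ + T_t L'_t · E[(a_t − a'_t)(a_t − a'_t)ᵀ] · L'_tᵀ T_tᵀ. -/
open Matrix MeasureTheory

/-!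
With `A = T_t (K_t − K'_t)` and `B = T_t L'_t`, the two filters differ by
`a_{t+1} − a'_{t+1} = B (a_t − a'_t) + A v_t`.
Both filter states are `𝔉_{t−1}`-measurable, whereas the innovation `v_t` has conditional mean
zero given `𝔉_{t−1}`. Pulling the known factor out of the conditional expectation kills the cross
moment `E[(a_t − a'_t) v_tᵀ]`, so the second moment of the sum is
`B E[(a_t − a'_t)(a_t − a'_t)ᵀ] Bᵀ + A E[v_t v_tᵀ] Aᵀ`, and the tower property gives
`E[v_t v_tᵀ] = F_t`.
-/

noncomputable def crossMoment {Ω ι κ : Type*} {m0 : MeasurableSpace Ω} (μ : Measure Ω)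
    (X : Ω → ι → ℝ) (Y : Ω → κ → ℝ) : Matrix ι κ ℝ :=
  of fun i j => ∫ ω, X ω i * Y ω j ∂μ

section CrossMoment

variable {Ω ι κ : Type*} {m0 : MeasurableSpace Ω} {μ : Measure Ω}

theorem transpose_crossMoment (X : Ω → ι → ℝ) (Y : Ω → κ → ℝ) :
    (crossMoment μ X Y)ᵀ = crossMoment μ Y X := by
  ext i j
  simp only [crossMoment, transpose_apply, of_apply, mul_comm]

variable [Fintype ι] [Fintype κ]

theorem MeasureTheory.MemLp.integrable_mul_apply {X : Ω → ι → ℝ} {Y : Ω → κ → ℝ}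
    (hX : MemLp X 2 μ) (hY : MemLp Y 2 μ) (i : ι) (j : κ) :
    Integrable (fun ω => X ω i * Y ω j) μ :=
  (hX.eval i).integrable_mul (hY.eval j)

theorem MeasureTheory.MemLp.mulVec {ι' : Type*} [Fintype ι'] {p : ENNReal} (A : Matrix ι' ι ℝ)
    {X : Ω → ι → ℝ} (hX : MemLp X p μ) : MemLp (fun ω => A *ᵥ X ω) p μ :=
  (mulVecLin A).toContinuousLinearMap.comp_memLp' hX

variable {X X' : Ω → ι → ℝ} {Y Y' : Ω → κ → ℝ}

theorem crossMoment_add_left (hX : MemLp X 2 μ) (hX' : MemLp X' 2 μ) (hY : MemLp Y 2 μ) :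
    crossMoment μ (fun ω => X ω + X' ω) Y = crossMoment μ X Y + crossMoment μ X' Y := by
  ext i j
  simp only [crossMoment, Matrix.add_apply, of_apply, Pi.add_apply, add_mul]
  exact integral_add (hX.integrable_mul_apply hY i j) (hX'.integrable_mul_apply hY i j)

theorem crossMoment_add_right (hX : MemLp X 2 μ) (hY : MemLp Y 2 μ) (hY' : MemLp Y' 2 μ) :
    crossMoment μ X (fun ω => Y ω + Y' ω) = crossMoment μ X Y + crossMoment μ X Y' := by
  rw [← transpose_crossMoment, crossMoment_add_left hY hY' hX, transpose_add,
    transpose_crossMoment, transpose_crossMoment]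

theorem crossMoment_mulVec_left {ι' : Type*} (A : Matrix ι' ι ℝ) (hX : MemLp X 2 μ)
    (hY : MemLp Y 2 μ) : crossMoment μ (fun ω => A *ᵥ X ω) Y = A * crossMoment μ X Y := by
  ext i j
  simp only [crossMoment, of_apply, mul_apply, mulVec, dotProduct, Finset.sum_mul, mul_assoc]
  rw [integral_finsetSum _ fun k _ => (hX.integrable_mul_apply hY k j).const_mul _]
  simp only [integral_const_mul]

theorem crossMoment_mulVec_right {κ' : Type*} (B : Matrix κ' κ ℝ) (hX : MemLp X 2 μ)
    (hY : MemLp Y 2 μ) : crossMoment μ X (fun ω => B *ᵥ Y ω) = crossMoment μ X Y * Bᵀ := by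
  rw [← transpose_crossMoment, crossMoment_mulVec_left B hY hX, transpose_mul,
    transpose_crossMoment]

theorem crossMoment_mulVec_add_mulVec_self {ι' : Type*} [Fintype ι'] (A : Matrix ι' ι ℝ)
    (B : Matrix ι' κ ℝ) (hX : MemLp X 2 μ) (hY : MemLp Y 2 μ) (hXY : crossMoment μ X Y = 0) :
    crossMoment μ (fun ω => A *ᵥ X ω + B *ᵥ Y ω) (fun ω => A *ᵥ X ω + B *ᵥ Y ω)
      = A * crossMoment μ X X * Aᵀ + B * crossMoment μ Y Y * Bᵀ := by
  have hAX := hX.mulVec A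
  have hBY := hY.mulVec B
  have hYX : crossMoment μ Y X = 0 := by rw [← transpose_crossMoment, hXY, transpose_zero]
  have hS : MemLp (fun ω => A *ᵥ X ω + B *ᵥ Y ω) 2 μ := hAX.add hBY
  rw [crossMoment_add_left hAX hBY hS, crossMoment_add_right hAX hAX hBY,
    crossMoment_add_right hBY hAX hBY, crossMoment_mulVec_left A hX hAX,
    crossMoment_mulVec_left A hX hBY, crossMoment_mulVec_left B hY hAX,
    crossMoment_mulVec_left B hY hBY, crossMoment_mulVec_right A hX hX,
    crossMoment_mulVec_right B hX hY, crossMoment_mulVec_right A hY hX,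
    crossMoment_mulVec_right B hY hY, hXY, hYX]
  simp only [Matrix.mul_zero, Matrix.zero_mul, add_zero, zero_add, Matrix.mul_assoc]

end CrossMoment

section Conditioning

variable {Ω : Type*} {m m0 : MeasurableSpace Ω} {μ : Measure Ω}

theorem condExp_eval {ι : Type*} [Fintype ι] {X : Ω → ι → ℝ} (hX : Integrable X μ) (i : ι) :
    μ[fun ω => X ω i | m] =ᵐ[μ] fun ω => μ[X | m] ω i :=
  ((ContinuousLinearMap.proj (R := ℝ) (φ := fun _ : ι => ℝ) i).comp_condExp_comm hX).symm

theorem condExp_sub_ae_eq_zero {E : Type*} [NormedAddCommGroup E] [NormedSpace ℝ E]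
    [CompleteSpace E] (hm : m ≤ m0) [SigmaFinite (μ.trim hm)] {Y G : Ω → E}
    (hY : Integrable Y μ) (hG : Integrable G μ) (hGm : StronglyMeasurable[m] G)
    (hYG : μ[Y | m] =ᵐ[μ] G) : μ[fun ω => Y ω - G ω | m] =ᵐ[μ] 0 := by
  filter_upwards [condExp_sub hY hG m, hYG] with ω hsub hY
  change μ[Y - G | m] ω = 0
  rw [hsub, Pi.sub_apply, hY, condExp_of_stronglyMeasurable hm hGm hG, sub_self]

theorem integral_mul_eq_zero_of_condExp_ae_eq_zero (hm : m ≤ m0) [SigmaFinite (μ.trim hm)]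
    {f g : Ω → ℝ} (hf : StronglyMeasurable[m] f) (hfg : Integrable (f * g) μ)
    (hg : Integrable g μ) (hg0 : μ[g | m] =ᵐ[μ] 0) : ∫ ω, f ω * g ω ∂μ = 0 :=
  calc ∫ ω, f ω * g ω ∂μ = ∫ ω, μ[f * g | m] ω ∂μ := (integral_condExp hm).symm
    _ = ∫ ω, (f * μ[g | m]) ω ∂μ :=
      integral_congr_ae (condExp_mul_of_stronglyMeasurable_left hf hfg hg)
    _ = 0 := by
      rw [integral_congr_ae (g := fun _ => 0) (hg0.mono fun ω h => by simp [h]), integral_zero]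

theorem integral_eq_of_condExp_ae_eq_const [IsProbabilityMeasure μ] (hm : m ≤ m0) {f : Ω → ℝ}
    {c : ℝ} (hf : μ[f | m] =ᵐ[μ] fun _ => c) : ∫ ω, f ω ∂μ = c := by
  rw [← integral_condExp hm, integral_congr_ae hf, integral_const, probReal_univ, one_smul]

variable {ι κ : Type*} {X : Ω → ι → ℝ} {Y : Ω → κ → ℝ}

theorem crossMoment_eq_zero_of_condExp_ae_eq_zero [Fintype ι] [Fintype κ] [IsFiniteMeasure μ]
    (hm : m ≤ m0) (hXm : StronglyMeasurable[m] X) (hX : MemLp X 2 μ) (hY : MemLp Y 2 μ)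
    (hY0 : μ[Y | m] =ᵐ[μ] 0) : crossMoment μ X Y = 0 := by
  ext i j
  refine integral_mul_eq_zero_of_condExp_ae_eq_zero hm
    ((continuous_apply i).comp_stronglyMeasurable hXm) ((hX.eval i).integrable_mul (hY.eval j))
    ((hY.eval j).integrable one_le_two) ?_
  filter_upwards [condExp_eval (m := m) (hY.integrable one_le_two) j, hY0] with ω h h0
  rw [h, h0]
  rfl

theorem crossMoment_eq_of_condExp_ae_eq_const [IsProbabilityMeasure μ] (hm : m ≤ m0)
    {C : Matrix ι κ ℝ} (hC : ∀ i j, μ[fun ω => X ω i * Y ω j | m] =ᵐ[μ] fun _ => C i j) :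
    crossMoment μ X Y = C := by
  ext i j
  exact integral_eq_of_condExp_ae_eq_const hm (hC i j)

end Conditioning

theorem stronglyMeasurable_sub_one_of_recursion {Ω E F : Type*} {m0 : MeasurableSpace Ω}
    [TopologicalSpace E] [TopologicalSpace F] (ℱ : Filtration ℕ m0) {y : ℕ → Ω → F}
    (hy : ∀ t, StronglyMeasurable[ℱ t] (y t)) {g : ℕ → E × F → E} (hg : ∀ t, Continuous (g t))
    {b : ℕ → Ω → E} (hb₁ : StronglyMeasurable[ℱ 0] (b 1))
    (hb : ∀ t, 1 ≤ t → ∀ ω, b (t + 1) ω = g t (b t ω, y t ω)) :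
    ∀ t, 1 ≤ t → StronglyMeasurable[ℱ (t - 1)] (b t) := by
  intro t ht
  induction t, ht using Nat.le_induction with
  | base => exact hb₁
  | succ t ht ih =>
    rw [funext (hb t ht), Nat.add_sub_cancel]
    exact (hg t).comp_stronglyMeasurable ((ih.mono (ℱ.mono (Nat.sub_le t 1))).prodMk (hy t))

section KalmanUpdate

variable {R l m n : Type*} [CommRing R] [Fintype m] [Fintype n]

def kalmanUpdate (T : Matrix l m R) (Z : Matrix n m R) (K : Matrix m n R) (x : m → R)
    (y : n → R) : l → R :=
  T *ᵥ x + T *ᵥ (K *ᵥ (y - Z *ᵥ x))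

theorem kalmanUpdate_sub_kalmanUpdate [DecidableEq m] (T : Matrix l m R) (Z : Matrix n m R)
    (K K' : Matrix m n R) (x x' : m → R) (y : n → R) :
    kalmanUpdate T Z K x y - kalmanUpdate T Z K' x' y
      = (T * (1 - K' * Z)) *ᵥ (x - x') + (T * (K - K')) *ᵥ (y - Z *ᵥ x) := by
  simp only [kalmanUpdate, ← mulVec_mulVec, sub_mulVec, mulVec_sub, one_mulVec]
  abel

theorem continuous_kalmanUpdate (T : Matrix l m ℝ) (Z : Matrix n m ℝ) (K : Matrix m n ℝ) :
    Continuous fun q : (m → ℝ) × (n → ℝ) => kalmanUpdate T Z K q.1 q.2 := by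
  unfold kalmanUpdate
  fun_prop

theorem stronglyMeasurable_kalmanUpdate_sub_one {Ω : Type*} {m0 : MeasurableSpace Ω}
    (ℱ : Filtration ℕ m0) {T : ℕ → Matrix m m ℝ} {Z : ℕ → Matrix n m ℝ}
    {K : ℕ → Matrix m n ℝ} {y : ℕ → Ω → n → ℝ} (hy : ∀ t, StronglyMeasurable[ℱ t] (y t))
    {b : ℕ → Ω → m → ℝ} {b₁ : m → ℝ} (hb₁ : ∀ ω, b 1 ω = b₁)
    (hb : ∀ t, 1 ≤ t → ∀ ω, b (t + 1) ω = kalmanUpdate (T t) (Z t) (K t) (b t ω) (y t ω)) :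
    ∀ t, 1 ≤ t → StronglyMeasurable[ℱ (t - 1)] (b t) :=
  stronglyMeasurable_sub_one_of_recursion ℱ hy (fun t => continuous_kalmanUpdate _ _ (K t))
    (by rw [funext hb₁]; exact stronglyMeasurable_const) hb

end KalmanUpdate

theorem second_moment_diff_recursion_general
    {Ω : Type*} {m0 : MeasurableSpace Ω} (μ : Measure Ω) [IsProbabilityMeasure μ]
    (ℱ : Filtration ℕ m0)
    {d p : ℕ}
    (Z : ℕ → Matrix (Fin d) (Fin p) ℝ) (T : ℕ → Matrix (Fin p) (Fin p) ℝ)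
    (K K' : ℕ → Matrix (Fin p) (Fin d) ℝ)
    (L' : ℕ → Matrix (Fin p) (Fin p) ℝ)
    (hL' : ∀ t, L' t = 1 - K' t * Z t)
    (y : ℕ → Ω → Fin d → ℝ)
    (hy_meas : ∀ t, StronglyMeasurable[ℱ t] (y t))
    (hy_L2 : ∀ t, MemLp (y t) 2 μ)
    (a a' : ℕ → Ω → Fin p → ℝ)
    (a₁ a₁' : Fin p → ℝ)
    (ha1 : ∀ ω, a 1 ω = a₁) (ha1' : ∀ ω, a' 1 ω = a₁')
    (ha : ∀ t, 1 ≤ t → ∀ ω,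
      a (t + 1) ω = (T t).mulVec (a t ω)
        + (T t).mulVec ((K t).mulVec (y t ω - (Z t).mulVec (a t ω))))
    (ha' : ∀ t, 1 ≤ t → ∀ ω,
      a' (t + 1) ω = (T t).mulVec (a' t ω)
        + (T t).mulVec ((K' t).mulVec (y t ω - (Z t).mulVec (a' t ω))))
    (ha_L2 : ∀ t, MemLp (a t) 2 μ) (ha'_L2 : ∀ t, MemLp (a' t) 2 μ)
    (v : ℕ → Ω → Fin d → ℝ)
    (hv : ∀ t ω, v t ω = y t ω - (Z t).mulVec (a t ω))
    (hcond : ∀ t, 1 ≤ t → μ[y t | ℱ (t - 1)] =ᵐ[μ] fun ω => (Z t).mulVec (a t ω))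
    (F : ℕ → Matrix (Fin d) (Fin d) ℝ)
    (hF : ∀ t, 1 ≤ t → ∀ i j,
      μ[fun ω => v t ω i * v t ω j | ℱ (t - 1)] =ᵐ[μ] fun _ => F t i j) :
    ∀ t, 1 ≤ t →
      (Matrix.of fun i j =>
          ∫ ω, (a (t + 1) ω i - a' (t + 1) ω i) * (a (t + 1) ω j - a' (t + 1) ω j) ∂μ)
        = T t * (K t - K' t) * F t * (K t - K' t)ᵀ * (T t)ᵀ
          + T t * L' t *
            (Matrix.of fun i j => ∫ ω, (a t ω i - a' t ω i) * (a t ω j - a' t ω j) ∂μ)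
            * (L' t)ᵀ * (T t)ᵀ := by
  intro t ht
  have hm : ℱ (t - 1) ≤ m0 := ℱ.le _
  have ha_meas := stronglyMeasurable_kalmanUpdate_sub_one ℱ hy_meas ha1 ha t ht
  have ha'_meas := stronglyMeasurable_kalmanUpdate_sub_one ℱ hy_meas ha1' ha' t ht
  set Δ : Ω → Fin p → ℝ := fun ω => a t ω - a' t ω
  have hΔ_L2 : MemLp Δ 2 μ := (ha_L2 t).sub (ha'_L2 t)
  have hv_eq : v t = fun ω => y t ω - Z t *ᵥ a t ω := funext (hv t)
  have hv_L2 : MemLp (v t) 2 μ := hv_eq ▸ (hy_L2 t).sub ((ha_L2 t).mulVec (Z t))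
  have hv_mean : μ[v t | ℱ (t - 1)] =ᵐ[μ] 0 := hv_eq ▸
    condExp_sub_ae_eq_zero hm ((hy_L2 t).integrable one_le_two)
      (((ha_L2 t).mulVec (Z t)).integrable one_le_two)
      ((continuous_const.matrix_mulVec continuous_id).comp_stronglyMeasurable ha_meas)
      (hcond t ht)
  have hstep : (fun ω => a (t + 1) ω - a' (t + 1) ω)
      = fun ω => (T t * L' t) *ᵥ Δ ω + (T t * (K t - K' t)) *ᵥ v t ω := by
    funext ω
    rw [ha t ht, ha' t ht, hv, hL']
    exact kalmanUpdate_sub_kalmanUpdate _ _ _ _ _ _ _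
  calc _ = crossMoment μ (fun ω => a (t + 1) ω - a' (t + 1) ω)
        (fun ω => a (t + 1) ω - a' (t + 1) ω) := rfl
    _ = (T t * L' t) * crossMoment μ Δ Δ * (T t * L' t)ᵀ
        + (T t * (K t - K' t)) * crossMoment μ (v t) (v t) * (T t * (K t - K' t))ᵀ := by
      rw [hstep]
      exact crossMoment_mulVec_add_mulVec_self _ _ hΔ_L2 hv_L2
        (crossMoment_eq_zero_of_condExp_ae_eq_zero hm (ha_meas.sub ha'_meas) hΔ_L2 hv_L2 hv_mean)
    _ = _ := by
      rw [crossMoment_eq_of_condExp_ae_eq_const hm (hF t ht), add_comm]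
      simp only [transpose_mul, Matrix.mul_assoc]
      rfl

/-- In the time-varying misspecified Kalman setting, if moreover
`E[v_t v_tᵀ | 𝔉_{t−1}] = F_t` a.s. for a deterministic matrix `F_t`, then for every `t ≥ 1`
`E[(a_{t+1} − a'_{t+1})(a_{t+1} − a'_{t+1})ᵀ]
  = T_t (K_t − K'_t) F_t (K_t − K'_t)ᵀ T_tᵀ
    + T_t L'_t E[(a_t − a'_t)(a_t − a'_t)ᵀ] L'_tᵀ T_tᵀ`. -/
theorem second_moment_diff_recursion
    {Ω : Type*} {m0 : MeasurableSpace Ω} (μ : Measure Ω) [IsProbabilityMeasure μ]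
    (ℱ : Filtration ℕ m0) (hℱ0 : ℱ 0 = ⊥)
    {d p : ℕ}
    (Z : ℕ → Matrix (Fin d) (Fin p) ℝ) (T : ℕ → Matrix (Fin p) (Fin p) ℝ)
    (K K' : ℕ → Matrix (Fin p) (Fin d) ℝ)
    (L' : ℕ → Matrix (Fin p) (Fin p) ℝ)
    (hL' : ∀ t, L' t = 1 - K' t * Z t)
    (y : ℕ → Ω → Fin d → ℝ)
    (hy_meas : ∀ t, StronglyMeasurable[ℱ t] (y t))
    (hy_L2 : ∀ t, MemLp (y t) 2 μ)
    (a a' : ℕ → Ω → Fin p → ℝ)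
    (a₁ a₁' : Fin p → ℝ)
    (ha1 : ∀ ω, a 1 ω = a₁) (ha1' : ∀ ω, a' 1 ω = a₁')
    (ha : ∀ t, 1 ≤ t → ∀ ω,
      a (t + 1) ω = (T t).mulVec (a t ω)
        + (T t).mulVec ((K t).mulVec (y t ω - (Z t).mulVec (a t ω))))
    (ha' : ∀ t, 1 ≤ t → ∀ ω,
      a' (t + 1) ω = (T t).mulVec (a' t ω)
        + (T t).mulVec ((K' t).mulVec (y t ω - (Z t).mulVec (a' t ω))))
    (ha_L2 : ∀ t, MemLp (a t) 2 μ) (ha'_L2 : ∀ t, MemLp (a' t) 2 μ)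
    (v : ℕ → Ω → Fin d → ℝ)
    (hv : ∀ t ω, v t ω = y t ω - (Z t).mulVec (a t ω))
    (hcond : ∀ t, 1 ≤ t → μ[y t | ℱ (t - 1)] =ᵐ[μ] fun ω => (Z t).mulVec (a t ω))
    (F : ℕ → Matrix (Fin d) (Fin d) ℝ)
    (hF : ∀ t, 1 ≤ t → ∀ i j,
      μ[fun ω => v t ω i * v t ω j | ℱ (t - 1)] =ᵐ[μ] fun _ => F t i j) :
    ∀ t, 1 ≤ t →
      (Matrix.of fun i j =>
          ∫ ω, (a (t + 1) ω i - a' (t + 1) ω i) * (a (t + 1) ω j - a' (t + 1) ω j) ∂μ)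
        = T t * (K t - K' t) * F t * (K t - K' t)ᵀ * (T t)ᵀ
          + T t * L' t *
            (Matrix.of fun i j => ∫ ω, (a t ω i - a' t ω i) * (a t ω j - a' t ω j) ∂μ)
            * (L' t)ᵀ * (T t)ᵀ :=
  second_moment_diff_recursion_general μ ℱ Z T K K' L' hL' y hy_meas hy_L2 a a' a₁ a₁' ha1 ha1' ha
    ha' ha_L2 ha'_L2 v hv hcond F hF
end

section
/- Let (B_t)_{t≥1} and B be p×p real matrices satisfying: (i) there exist M₁ > 0 and r₁ ∈ (0,1) with ‖B_t − B‖_F ≤ M₁ r₁ᵗ for all t ≥ 1 and ‖Bᵏ‖_F ≤ M₁ r₁ᵏ for all k ≥ 0; (ii) there exists M₃ > 0 such that ‖∏_{i=k}^{l} B_{t−i}‖_F ≤ M₃ for all integers 0 ≤ k ≤ l < t. Then there exist M > 0 and r ∈ (0,1) such that for all t ≥ 1 and all 0 ≤ j ≤ t − 1: ‖B_t B_{t−1} ⋯ B_{t−j}‖_F ≤ M (j+2) r^{j+1}. -/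
open Matrix Set

/-- The Frobenius norm of a real matrix: `‖A‖_F = √(tr (A * Aᵀ))`. -/
noncomputable def frobNorm {m n : Type*} [Fintype m] [Fintype n] (A : Matrix m n ℝ) : ℝ :=
  Real.sqrt (Matrix.trace (A * Aᵀ))

/-- The ordered product `∏_{i=k}^{l} B_{t−i} = B_{t−k} B_{t−k−1} ⋯ B_{t−l}`. -/
noncomputable def ordProd {p : ℕ} (B : ℕ → Matrix (Fin p) (Fin p) ℝ) (t k l : ℕ) :
    Matrix (Fin p) (Fin p) ℝ :=
  ((List.range (l - k + 1)).map fun i => B (t - (k + i))).prod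

/-!
Write `P_n(s) = B_s B_{s-1} ⋯ B_{s-n+1}` (`descProd B s n`) and `A = lim B_t`. Telescoping gives
`P_n(s) - Aⁿ = ∑_{k<n} Aᵏ (B_{s-k} - A) P_{n-k-1}(s-k-1)`, and each summand is at most
`M₁ rᵏ · M₁ r^{s-k} · C = M₁² C rˢ`, where `C` bounds all partial products, the empty one
included. Hence `‖P_n(s)‖ ≤ M₁ rⁿ + n M₁² C rˢ ≤ (M₁ + n M₁² C) rⁿ` for `n ≤ s`.
-/

open Finset
open scoped Matrix.Norms.Frobenius

lemma frobNorm_eq_norm {m n : Type*} [Fintype m] [Fintype n] (A : Matrix m n ℝ) :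
    frobNorm A = ‖A‖ := by
  rw [frobNorm, frobenius_norm_def, ← Real.sqrt_eq_rpow]
  congr 1
  simp only [trace, Matrix.diag, mul_apply, transpose_apply]
  refine Finset.sum_congr rfl fun i _ => Finset.sum_congr rfl fun j _ => ?_
  rw [Real.rpow_two, Real.norm_eq_abs, sq_abs, sq]

section descProd

variable {R : Type*}

def descProd [Monoid R] (b : ℕ → R) (s n : ℕ) : R :=
  ((List.range n).map fun i => b (s - i)).prod

@[simp]
lemma descProd_zero [Monoid R] (b : ℕ → R) (s : ℕ) : descProd b s 0 = 1 := rfl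

lemma descProd_succ [Monoid R] (b : ℕ → R) (s n : ℕ) :
    descProd b s (n + 1) = b s * descProd b (s - 1) n := by
  simp only [descProd, List.range_succ_eq_map, List.map_cons, List.map_map, List.prod_cons,
    Nat.sub_zero]
  congr 2
  refine List.map_congr_left fun i _ => ?_
  simp only [Function.comp_apply]
  congr 1
  omega

lemma ordProd_zero_eq_descProd {p : ℕ} (B : ℕ → Matrix (Fin p) (Fin p) ℝ) (t j : ℕ) :
    ordProd B t 0 j = descProd B t (j + 1) := by
  simp only [ordProd, descProd, Nat.sub_zero, Nat.zero_add]

lemma descProd_sub_pow [Ring R] (b : ℕ → R) (a : R) (n s : ℕ) :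
    descProd b s n - a ^ n =
      ∑ k ∈ range n, a ^ k * (b (s - k) - a) * descProd b (s - k - 1) (n - k - 1) := by
  induction n generalizing s with
  | zero => simp
  | succ n ih =>
    have peel : descProd b s (n + 1) - a ^ (n + 1) =
        (b s - a) * descProd b (s - 1) n + a * (descProd b (s - 1) n - a ^ n) := by
      rw [descProd_succ, pow_succ']
      noncomm_ring
    rw [peel, ih, Finset.mul_sum, sum_range_succ', add_comm]
    simp only [pow_zero, one_mul, Nat.sub_zero, Nat.add_sub_cancel, ← mul_assoc, ← pow_succ']
    congr 1
    refine sum_congr rfl fun k _ => ?_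
    rw [show s - 1 - k = s - (k + 1) by omega, show n - k - 1 = n + 1 - (k + 1) - 1 by omega]

variable [SeminormedRing R] {b : ℕ → R} {a : R} {M r C : ℝ} {s n : ℕ}

lemma norm_descProd_sub_pow_le (hb : ∀ s, 1 ≤ s → ‖b s - a‖ ≤ M * r ^ s)
    (ha : ∀ k, ‖a ^ k‖ ≤ M * r ^ k) (hC : ∀ s m, m ≤ s → ‖descProd b s m‖ ≤ C) (hns : n ≤ s) :
    ‖descProd b s n - a ^ n‖ ≤ n * (M * M * C * r ^ s) := by
  rw [descProd_sub_pow]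
  refine (norm_sum_le _ _).trans <|
    (sum_le_card_nsmul _ _ (M * M * C * r ^ s) fun k hk => ?_).trans_eq (by simp)
  have hkn : k < n := mem_range.mp hk
  have hpow := ha k
  have hdiff := hb (s - k) (by omega)
  have hr_split : r ^ s = r ^ k * r ^ (s - k) := by rw [← pow_add]; congr 1; omega
  calc ‖a ^ k * (b (s - k) - a) * descProd b (s - k - 1) (n - k - 1)‖
      ≤ ‖a ^ k‖ * ‖b (s - k) - a‖ * ‖descProd b (s - k - 1) (n - k - 1)‖ := norm_mul₃_le
    _ ≤ M * r ^ k * (M * r ^ (s - k)) * C := by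
      refine mul_le_mul (mul_le_mul hpow hdiff (norm_nonneg _) ?_) (hC _ _ (by omega))
        (norm_nonneg _) ?_
      · exact (norm_nonneg _).trans hpow
      · exact mul_nonneg ((norm_nonneg _).trans hpow) ((norm_nonneg _).trans hdiff)
    _ = M * M * C * r ^ s := by rw [hr_split]; ring

lemma norm_descProd_le (hr0 : 0 ≤ r) (hr1 : r ≤ 1) (hb : ∀ s, 1 ≤ s → ‖b s - a‖ ≤ M * r ^ s)
    (ha : ∀ k, ‖a ^ k‖ ≤ M * r ^ k) (hC : ∀ s m, m ≤ s → ‖descProd b s m‖ ≤ C) (hns : n ≤ s) :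
    ‖descProd b s n‖ ≤ (M + n * (M * M * C)) * r ^ n := by
  have hMC : 0 ≤ M * M * C :=
    mul_nonneg (mul_self_nonneg M) ((norm_nonneg _).trans (hC 0 0 le_rfl))
  have hrs : r ^ s ≤ r ^ n := pow_le_pow_of_le_one hr0 hr1 hns
  calc ‖descProd b s n‖ ≤ ‖a ^ n‖ + ‖descProd b s n - a ^ n‖ := norm_le_insert' _ _
    _ ≤ M * r ^ n + n * (M * M * C * r ^ s) :=
      add_le_add (ha n) (norm_descProd_sub_pow_le hb ha hC hns)
    _ ≤ M * r ^ n + n * (M * M * C * r ^ n) := by gcongr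
    _ = (M + n * (M * M * C)) * r ^ n := by ring

end descProd

theorem ordProd_le_geometric_general
    {p : ℕ} (B : ℕ → Matrix (Fin p) (Fin p) ℝ) (Blim : Matrix (Fin p) (Fin p) ℝ)
    (M₁ r₁ : ℝ) (hM₁ : 0 < M₁) (hr₁ : r₁ ∈ Ioo (0 : ℝ) 1)
    (hB : ∀ t : ℕ, 1 ≤ t → frobNorm (B t - Blim) ≤ M₁ * r₁ ^ t)
    (hBpow : ∀ k : ℕ, frobNorm (Blim ^ k) ≤ M₁ * r₁ ^ k)
    (M₃ : ℝ)
    (hbdd : ∀ t k l : ℕ, k ≤ l → l < t → frobNorm (ordProd B t k l) ≤ M₃) :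
    ∃ M > (0 : ℝ), ∃ r ∈ Ioo (0 : ℝ) 1, ∀ t : ℕ, 1 ≤ t → ∀ j : ℕ, j < t →
      frobNorm (ordProd B t 0 j) ≤ M * (j + 2 : ℝ) * r ^ (j + 1) := by
  simp only [frobNorm_eq_norm] at hB hBpow hbdd ⊢
  set C := max M₃ ‖(1 : Matrix (Fin p) (Fin p) ℝ)‖
  have hC0 : 0 ≤ C := le_max_of_le_right (norm_nonneg _)
  have hC : ∀ s m, m ≤ s → ‖descProd B s m‖ ≤ C := by
    rintro s (_ | m) hms
    · exact le_max_right _ _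
    · rw [← ordProd_zero_eq_descProd]
      exact (hbdd s 0 m m.zero_le (by omega)).trans (le_max_left _ _)
  refine ⟨M₁ * (1 + M₁ * C), by positivity, r₁, hr₁, fun t _ j hjt => ?_⟩
  rw [ordProd_zero_eq_descProd]
  refine (norm_descProd_le hr₁.1.le hr₁.2.le hB hBpow hC hjt).trans ?_
  refine mul_le_mul_of_nonneg_right ?_ (pow_nonneg hr₁.1.le _)
  push_cast
  have hM₁C : 0 ≤ M₁ * C := mul_nonneg hM₁.le hC0
  nlinarith [mul_nonneg hM₁C (j.cast_nonneg : (0 : ℝ) ≤ j)]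

/-- Under the same hypotheses as Statement 5, there are `M > 0`,
`r ∈ (0,1)` with `‖B_t B_{t−1} ⋯ B_{t−j}‖_F ≤ M (j+2) r^{j+1}` for all `t ≥ 1`,
`0 ≤ j ≤ t−1`. -/
theorem ordProd_le_geometric
    {p : ℕ} (B : ℕ → Matrix (Fin p) (Fin p) ℝ) (Blim : Matrix (Fin p) (Fin p) ℝ)
    (M₁ r₁ : ℝ) (hM₁ : 0 < M₁) (hr₁ : r₁ ∈ Ioo (0 : ℝ) 1)
    (hB : ∀ t : ℕ, 1 ≤ t → frobNorm (B t - Blim) ≤ M₁ * r₁ ^ t)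
    (hBpow : ∀ k : ℕ, frobNorm (Blim ^ k) ≤ M₁ * r₁ ^ k)
    (M₃ : ℝ) (hM₃ : 0 < M₃)
    (hbdd : ∀ t k l : ℕ, k ≤ l → l < t → frobNorm (ordProd B t k l) ≤ M₃) :
    ∃ M > (0 : ℝ), ∃ r ∈ Ioo (0 : ℝ) 1, ∀ t : ℕ, 1 ≤ t → ∀ j : ℕ, j < t →
      frobNorm (ordProd B t 0 j) ≤ M * (j + 2 : ℝ) * r ^ (j + 1) :=
  ordProd_le_geometric_general B Blim M₁ r₁ hM₁ hr₁ hB hBpow M₃ hbdd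
end
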